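/- arXiv:0910.1623 — 2 statements merged into one kernel-verified Lean document; each statement's English description precedes it below -/
import Mathlib

section
/- Under the setup of the previous statement (T, Δ disjoint, RIP constants satisfying 1 − δ_{|Δ|} − θ_{|Δ|,|T|}²/(1−δ_{|T|}) > 0), the ℓ² error bound of modified-BPDN restricted to N_e = T∪Δ satisfies: ‖b̃ − c‖₂ ≤ γ √|Δ| · √( θ_{|T|,|Δ|}²/(1−δ_{|T|})² + 1 ) · 1/(1 − δ_{|Δ|} − θ_{|Δ|,|T|}²/(1−δ_{|T|})), where b̃ minimizes L(b) = (1/2)‖y−Ab‖₂² + γ‖b_{T^c}‖₁ over vectors supported on N_e and c is the least-squares estimate on N_e. -/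
open Matrix Finset

noncomputable section

variable {n m : ℕ}

/-- Submatrix of columns of `A` indexed by `S`. -/
def cols (A : Matrix (Fin n) (Fin m) ℝ) (S : Finset (Fin m)) :
    Matrix (Fin n) {j // j ∈ S} ℝ := Matrix.of fun i j => A i j.1

/-- Subvector of `b` on indices in `S`. -/
def subv (b : Fin m → ℝ) (S : Finset (Fin m)) : {j // j ∈ S} → ℝ := fun j => b j.1

/-- `b` is supported on `S`. -/
def suppOn (b : Fin m → ℝ) (S : Finset (Fin m)) : Prop := ∀ j, j ∉ S → b j = 0

def l2v {k : Type*} [Fintype k] (v : k → ℝ) : ℝ := Real.sqrt (∑ i, v i ^ 2)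

def l1v {k : Type*} [Fintype k] (v : k → ℝ) : ℝ := ∑ i, |v i|

def linfv {k : Type*} [Fintype k] (v : k → ℝ) : ℝ := ⨆ i, |v i|

/-- ℓ¹ norm of the subvector of `b` on the complement of `T`. -/
def l1c (b : Fin m → ℝ) (T : Finset (Fin m)) : ℝ := ∑ j ∈ Tᶜ, |b j|

/-- Induced ℓ∞→ℓ∞ operator norm (max absolute row sum). -/
def matInf {k l : Type*} [Fintype k] [Fintype l] (B : Matrix k l ℝ) : ℝ :=
  ⨆ i, ∑ j, |B i j|

/-- Spectral norm (ℓ²→ℓ² operator norm). -/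
def spec {k l : Type*} [Fintype k] [Fintype l] (B : Matrix k l ℝ) : ℝ :=
  sSup ((fun x => l2v (B.mulVec x)) '' {x | l2v x ≤ 1})

/-- The modified-BPDN objective L(b) = (1/2)‖y − Ab‖₂² + γ‖b_{Tᶜ}‖₁. -/
def objL (A : Matrix (Fin n) (Fin m) ℝ) (y : Fin n → ℝ) (γ : ℝ) (T : Finset (Fin m))
    (b : Fin m → ℝ) : ℝ :=
  (1/2) * (∑ i, (y i - A.mulVec b i) ^ 2) + γ * l1c b T

/-- Orthogonal projector M = I − A_T (A_Tᵀ A_T)⁻¹ A_Tᵀ. -/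
def projM (A : Matrix (Fin n) (Fin m) ℝ) (T : Finset (Fin m)) : Matrix (Fin n) (Fin n) ℝ :=
  1 - cols A T * ((cols A T)ᵀ * cols A T)⁻¹ * (cols A T)ᵀ

/-- Least squares coefficients on `S` : (A_Sᵀ A_S)⁻¹ A_Sᵀ y. -/
def lsq (A : Matrix (Fin n) (Fin m) ℝ) (S : Finset (Fin m)) (y : Fin n → ℝ) :
    {j // j ∈ S} → ℝ :=
  ((cols A S)ᵀ * cols A S)⁻¹.mulVec ((cols A S)ᵀ.mulVec y)

/-- Least squares estimate on `S`, as a vector in ℝᵐ supported on `S`. -/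
def lsqFull (A : Matrix (Fin n) (Fin m) ℝ) (S : Finset (Fin m)) (y : Fin n → ℝ) :
    Fin m → ℝ := fun j => if h : j ∈ S then lsq A S y ⟨j, h⟩ else 0

/-- The matrix A_Δᵀ M A_Δ. -/
def schur (A : Matrix (Fin n) (Fin m) ℝ) (T Δ : Finset (Fin m)) :
    Matrix {j // j ∈ Δ} {j // j ∈ Δ} ℝ :=
  (cols A Δ)ᵀ * projM A T * cols A Δ

/-- The matrix (A_Tᵀ A_T)⁻¹ A_Tᵀ A_Δ (A_Δᵀ M A_Δ)⁻¹. -/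
def crossMat (A : Matrix (Fin n) (Fin m) ℝ) (T Δ : Finset (Fin m)) :
    Matrix {j // j ∈ T} {j // j ∈ Δ} ℝ :=
  ((cols A T)ᵀ * cols A T)⁻¹ * ((cols A T)ᵀ * cols A Δ) * (schur A T Δ)⁻¹

/-- The exact-recovery-coefficient quantity ‖(A_Δᵀ M A_Δ)⁻¹ A_Δᵀ M A_ω‖₁. -/
def erc (A : Matrix (Fin n) (Fin m) ℝ) (T Δ : Finset (Fin m)) (ω : Fin m) : ℝ :=
  l1v ((schur A T Δ)⁻¹.mulVec (((cols A Δ)ᵀ * projM A T).mulVec (fun i => A i ω)))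

/-- `δ` is a valid S-restricted isometry constant for `A`. -/
def RIP (A : Matrix (Fin n) (Fin m) ℝ) (S : ℕ) (δ : ℝ) : Prop :=
  0 ≤ δ ∧ ∀ (J : Finset (Fin m)), J.card ≤ S → ∀ x : Fin m → ℝ, suppOn x J →
    (1 - δ) * (∑ i, x i ^ 2) ≤ (∑ i, (A.mulVec x i) ^ 2) ∧
    (∑ i, (A.mulVec x i) ^ 2) ≤ (1 + δ) * (∑ i, x i ^ 2)

/-- `θ` is a valid (S,S')-restricted orthogonality constant for `A`. -/
def ROC (A : Matrix (Fin n) (Fin m) ℝ) (S S' : ℕ) (θ : ℝ) : Prop :=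
  0 ≤ θ ∧ ∀ (J J' : Finset (Fin m)), Disjoint J J' → J.card ≤ S → J'.card ≤ S' →
    ∀ x x' : Fin m → ℝ, suppOn x J → suppOn x' J' →
      |dotProduct (A.mulVec x) (A.mulVec x')| ≤ θ * l2v x * l2v x'

/-- `b` minimizes the modified-BPDN objective over vectors supported on `S`. -/
def IsRestrMin (A : Matrix (Fin n) (Fin m) ℝ) (y : Fin n → ℝ) (γ : ℝ)
    (T S : Finset (Fin m)) (b : Fin m → ℝ) : Prop :=
  suppOn b S ∧ ∀ b', suppOn b' S → objL A y γ T b ≤ objL A y γ T b'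

/-- `g` is a subgradient of `b ↦ ‖b_{Tᶜ}‖₁` at `b`. -/
def IsSubgrad (T : Finset (Fin m)) (b g : Fin m → ℝ) : Prop :=
  (∀ j, j ∈ T → g j = 0) ∧
  ∀ j, j ∉ T → |g j| ≤ 1 ∧ (b j ≠ 0 → g j = Real.sign (b j))

/-! Write `u = b̃ - c` and split it as `u_T + u_Δ`. The normal equations for `c` and the
first-order optimality conditions for `b̃` (perturb one coordinate at a time) show that the
correlations `Aᵀ A u` vanish on `T` and are bounded by `γ` on `Δ`. Hence `⟪A u_T, A u⟫ = 0` and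
`⟪A u_Δ, A u⟫ ≤ γ ‖u_Δ‖₁ ≤ γ √|Δ| ‖u_Δ‖₂`. Bounding `‖A u_T‖²`, `‖A u_Δ‖²` below by RIP and the
cross term `⟪A u_T, A u_Δ⟫` by ROC gives `(1 - δ_T) ‖u_T‖ ≤ θ ‖u_Δ‖` and
`(1 - δ_Δ - θ² / (1 - δ_T)) ‖u_Δ‖ ≤ γ √|Δ|`, and `‖u‖² = ‖u_T‖² + ‖u_Δ‖²`. -/

open Filter Topology

lemma l2v_nonneg {k : Type*} [Fintype k] (v : k → ℝ) : 0 ≤ l2v v := Real.sqrt_nonneg _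

lemma sq_l2v {k : Type*} [Fintype k] (v : k → ℝ) : l2v v ^ 2 = ∑ i, v i ^ 2 :=
  Real.sq_sqrt (sum_nonneg fun _ _ => sq_nonneg _)

lemma sum_sq_eq_sq_l2v_of_suppOn {x : Fin m → ℝ} {J : Finset (Fin m)} (hx : suppOn x J) :
    ∑ j ∈ J, x j ^ 2 = l2v x ^ 2 := by
  rw [sq_l2v]
  exact sum_subset (subset_univ J) fun j _ hj => by rw [hx j hj]; ring

lemma sum_abs_le_sqrt_card_mul_l2v {x : Fin m → ℝ} {J : Finset (Fin m)} (hx : suppOn x J) :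
    ∑ j ∈ J, |x j| ≤ √(J.card) * l2v x := by
  rw [l2v, ← sq_l2v, ← sum_sq_eq_sq_l2v_of_suppOn hx]
  simpa using Real.sum_mul_le_sqrt_mul_sqrt J (fun _ => 1) (fun j => |x j|)

lemma dotProduct_eq_zero_of_suppOn {x w : Fin m → ℝ} {J : Finset (Fin m)} (hx : suppOn x J)
    (hw : ∀ j ∈ J, w j = 0) : x ⬝ᵥ w = 0 :=
  sum_eq_zero fun j _ => by
    by_cases hj : j ∈ J
    · rw [hw j hj, mul_zero]
    · rw [hx j hj, zero_mul]

lemma dotProduct_le_of_suppOn {x w : Fin m → ℝ} {J : Finset (Fin m)} {γ : ℝ} (hx : suppOn x J)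
    (hw : ∀ j ∈ J, |w j| ≤ γ) : x ⬝ᵥ w ≤ γ * ∑ j ∈ J, |x j| := by
  rw [mul_sum, dotProduct, ← sum_subset (subset_univ J) fun j _ hj => by rw [hx j hj, zero_mul]]
  refine sum_le_sum fun j hj => (le_abs_self _).trans ?_
  rw [abs_mul, mul_comm γ]
  exact mul_le_mul_of_nonneg_left (hw j hj) (abs_nonneg _)

lemma RIP.sq_l2v_le {A : Matrix (Fin n) (Fin m) ℝ} {s : ℕ} {δ : ℝ} (h : RIP A s δ)
    {J : Finset (Fin m)} (hJ : J.card ≤ s) {x : Fin m → ℝ} (hx : suppOn x J) :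
    (1 - δ) * l2v x ^ 2 ≤ (A *ᵥ x) ⬝ᵥ (A *ᵥ x) := by
  rw [sq_l2v]
  simpa [dotProduct, sq] using (h.2 J hJ x hx).1

lemma mulVec_dotProduct_mulVec (A : Matrix (Fin n) (Fin m) ℝ) (x v : Fin m → ℝ) :
    (A *ᵥ x) ⬝ᵥ (A *ᵥ v) = x ⬝ᵥ (Aᵀ *ᵥ (A *ᵥ v)) := by
  rw [dotProduct_comm, dotProduct_mulVec, ← mulVec_transpose, dotProduct_comm]

lemma eq_indicator_add_indicator_of_suppOn_union {u : Fin m → ℝ} {T Δ : Finset (Fin m)}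
    (hdisj : Disjoint T Δ) (hu : suppOn u (T ∪ Δ)) :
    u = (T : Set (Fin m)).indicator u + (Δ : Set (Fin m)).indicator u := by
  ext j
  by_cases hjT : j ∈ T
  · simp [hjT, disjoint_left.mp hdisj hjT]
  by_cases hjΔ : j ∈ Δ
  · simp [hjT, hjΔ]
  · simp [hjT, hjΔ, hu j (by simp [hjT, hjΔ])]

lemma suppOn_indicator (u : Fin m → ℝ) (J : Finset (Fin m)) :
    suppOn ((J : Set (Fin m)).indicator u) J :=
  fun _ hj => Set.indicator_of_notMem (mem_coe.not.mpr hj) u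

lemma sq_l2v_add_of_disjoint {x z : Fin m → ℝ} {T Δ : Finset (Fin m)} (hdisj : Disjoint T Δ)
    (hx : suppOn x T) (hz : suppOn z Δ) : l2v (x + z) ^ 2 = l2v x ^ 2 + l2v z ^ 2 := by
  have hxz : ∀ j, x j * z j = 0 := fun j => by
    by_cases hjT : j ∈ T
    · rw [hz j (disjoint_left.mp hdisj hjT), mul_zero]
    · rw [hx j hjT, zero_mul]
  simp only [sq_l2v, Pi.add_apply, ← sum_add_distrib]
  exact sum_congr rfl fun j _ => by linear_combination 2 * hxz j

lemma abs_le_of_forall_nonneg_quadratic {S C γ : ℝ}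
    (h : ∀ t : ℝ, 0 ≤ t * S + t ^ 2 * C + γ * |t|) : |S| ≤ γ := by
  have key : ∀ s > 0, |S| ≤ γ + s * C := by
    intro s hs
    have hright := h s
    have hleft := h (-s)
    rw [abs_of_pos hs] at hright
    rw [abs_neg, abs_of_pos hs] at hleft
    refine abs_le.mpr ⟨?_, ?_⟩ <;> nlinarith
  have hlim : Tendsto (fun s => γ + s * C) (𝓝[>] 0) (𝓝 γ) := by
    refine tendsto_nhdsWithin_of_tendsto_nhds ?_
    exact (by fun_prop : Continuous fun s : ℝ => γ + s * C).tendsto' 0 γ (by simp)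
  exact ge_of_tendsto hlim (eventually_nhdsWithin_of_forall key)

lemma transpose_mulVec_apply (A : Matrix (Fin n) (Fin m) ℝ) (r : Fin n → ℝ) (j : Fin m) :
    (Aᵀ *ᵥ r) j = ∑ i, A i j * r i := rfl

lemma sum_sq_sub_mulVec_add_single (A : Matrix (Fin n) (Fin m) ℝ) (y : Fin n → ℝ)
    (b : Fin m → ℝ) (j : Fin m) (t : ℝ) : ∑ i, (y i - (A *ᵥ (b + Pi.single j t)) i) ^ 2 =
      ∑ i, (y i - (A *ᵥ b) i) ^ 2 + 2 * t * (Aᵀ *ᵥ (A *ᵥ b - y)) j + t ^ 2 * ∑ i, A i j ^ 2 := by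
  have hpt : ∀ i, (y i - (A *ᵥ (b + Pi.single j t)) i) ^ 2 = (y i - (A *ᵥ b) i) ^ 2 +
      2 * t * (A i j * (A *ᵥ b - y) i) + t ^ 2 * A i j ^ 2 := fun i => by
    simp only [mulVec_add, mulVec_single, Pi.add_apply, Pi.sub_apply, Pi.smul_apply, col_apply,
      op_smul_eq_mul]
    ring
  rw [sum_congr rfl fun i _ => hpt i, sum_add_distrib, sum_add_distrib, ← mul_sum, ← mul_sum,
    transpose_mulVec_apply]

lemma l1c_add_single_of_mem {T : Finset (Fin m)} {j : Fin m} (hj : j ∈ T) (b : Fin m → ℝ)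
    (t : ℝ) : l1c (b + Pi.single j t) T = l1c b T :=
  sum_congr rfl fun k hk => by
    rw [Pi.add_apply, Pi.single_eq_of_ne (ne_of_mem_of_not_mem hj (mem_compl.mp hk)).symm,
      add_zero]

lemma l1c_add_single_le (T : Finset (Fin m)) (b : Fin m → ℝ) (j : Fin m) (t : ℝ) :
    l1c (b + Pi.single j t) T ≤ l1c b T + |t| := by
  have hsingle : ∑ k ∈ Tᶜ, |Pi.single j t k| ≤ |t| := by
    calc ∑ k ∈ Tᶜ, |Pi.single j t k| ≤ ∑ k, |Pi.single j t k| :=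
          sum_le_univ_sum_of_nonneg fun _ => abs_nonneg _
      _ = |t| := by simp [Pi.single_apply, apply_ite]
  calc l1c (b + Pi.single j t) T ≤ ∑ k ∈ Tᶜ, (|b k| + |(Pi.single j t : Fin m → ℝ) k|) :=
        sum_le_sum fun k _ => abs_add_le _ _
    _ ≤ l1c b T + |t| := by simp only [sum_add_distrib]; exact add_le_add_right hsingle _

namespace IsRestrMin

variable {A : Matrix (Fin n) (Fin m) ℝ} {y : Fin n → ℝ} {γ : ℝ} {T S : Finset (Fin m)}
  {b : Fin m → ℝ} {j : Fin m}

lemma nonneg_of_add_single (h : IsRestrMin A y γ T S b) (hj : j ∈ S) (t : ℝ) :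
    0 ≤ t * (Aᵀ *ᵥ (A *ᵥ b - y)) j + t ^ 2 * (∑ i, A i j ^ 2 / 2) +
      γ * (l1c (b + Pi.single j t) T - l1c b T) := by
  have hsupp : suppOn (b + Pi.single j t) S := fun k hk => by
    rw [Pi.add_apply, h.1 k hk, Pi.single_eq_of_ne (ne_of_mem_of_not_mem hj hk).symm, add_zero]
  have hle := h.2 _ hsupp
  rw [objL, objL, sum_sq_sub_mulVec_add_single] at hle
  rw [← sum_div]
  linarith

lemma transpose_mulVec_residual_eq_zero (h : IsRestrMin A y γ T S b) (hjS : j ∈ S)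
    (hjT : j ∈ T) : (Aᵀ *ᵥ (A *ᵥ b - y)) j = 0 :=
  abs_nonpos_iff.mp <| abs_le_of_forall_nonneg_quadratic (γ := 0) fun t => by
    simpa [l1c_add_single_of_mem hjT] using h.nonneg_of_add_single hjS t

lemma abs_transpose_mulVec_residual_le (hγ : 0 ≤ γ) (h : IsRestrMin A y γ T S b) (hjS : j ∈ S) :
    |(Aᵀ *ᵥ (A *ᵥ b - y)) j| ≤ γ :=
  abs_le_of_forall_nonneg_quadratic fun t => (h.nonneg_of_add_single hjS t).trans <| by
    have := l1c_add_single_le T b j t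
    gcongr
    linarith

end IsRestrMin

section LeastSquares

variable {A : Matrix (Fin n) (Fin m) ℝ} {S : Finset (Fin m)} {y : Fin n → ℝ}

lemma mulVec_eq_cols_mulVec_subv {b : Fin m → ℝ} (hb : suppOn b S) :
    A *ᵥ b = cols A S *ᵥ subv b S := by
  funext i
  simp only [mulVec, dotProduct, cols, subv, of_apply]
  rw [sum_coe_sort S fun j => A i j * b j]
  exact (sum_subset (subset_univ S) fun j _ hj => by rw [hb j hj, mul_zero]).symm

lemma transpose_cols_mulVec_apply (w : Fin n → ℝ) {j : Fin m} (hj : j ∈ S) :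
    ((cols A S)ᵀ *ᵥ w) ⟨j, hj⟩ = (Aᵀ *ᵥ w) j := rfl

lemma suppOn_lsqFull : suppOn (lsqFull A S y) S := fun _ hj => dif_neg hj

lemma mulVec_lsqFull : A *ᵥ lsqFull A S y = cols A S *ᵥ lsq A S y := by
  rw [mulVec_eq_cols_mulVec_subv suppOn_lsqFull]
  congr 1
  exact funext fun j => dif_pos j.2

lemma gram_mulVec_lsq (hS : IsUnit ((cols A S)ᵀ * cols A S)) :
    ((cols A S)ᵀ * cols A S) *ᵥ lsq A S y = (cols A S)ᵀ *ᵥ y := by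
  rw [lsq, mulVec_mulVec, mul_nonsing_inv _ ((isUnit_iff_isUnit_det _).mp hS), one_mulVec]

lemma transpose_mulVec_lsqFull_residual_eq_zero (hS : IsUnit ((cols A S)ᵀ * cols A S))
    {j : Fin m} (hj : j ∈ S) : (Aᵀ *ᵥ (A *ᵥ lsqFull A S y - y)) j = 0 := by
  rw [← transpose_cols_mulVec_apply _ hj, mulVec_lsqFull, mulVec_sub, mulVec_mulVec,
    gram_mulVec_lsq hS, sub_self, Pi.zero_apply]

lemma transpose_mulVec_mulVec_sub_lsqFull (hS : IsUnit ((cols A S)ᵀ * cols A S))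
    (b : Fin m → ℝ) {j : Fin m} (hj : j ∈ S) :
    (Aᵀ *ᵥ (A *ᵥ (b - lsqFull A S y))) j = (Aᵀ *ᵥ (A *ᵥ b - y)) j := by
  rw [show A *ᵥ (b - lsqFull A S y) = (A *ᵥ b - y) - (A *ᵥ lsqFull A S y - y) by
      rw [mulVec_sub]; abel,
    mulVec_sub, Pi.sub_apply, transpose_mulVec_lsqFull_residual_eq_zero hS hj, sub_zero]

end LeastSquares

lemma sqrt_sq_add_sq_le_of_quadratic_bounds {a b D θ δ g : ℝ} (ha : 0 ≤ a) (hb : 0 ≤ b) (hD : 0 < D)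
    (hθ : 0 ≤ θ) (hg : 0 ≤ g) (hK : 0 < 1 - δ - θ ^ 2 / D) (hT : D * a ^ 2 ≤ θ * a * b)
    (hΔ : (1 - δ) * b ^ 2 ≤ g * b + θ * a * b) :
    √(a ^ 2 + b ^ 2) ≤ g * √(θ ^ 2 / D ^ 2 + 1) * (1 / (1 - δ - θ ^ 2 / D)) := by
  set K := 1 - δ - θ ^ 2 / D
  have hDa : D * a ≤ θ * b := by
    rcases ha.eq_or_lt with rfl | ha'
    · simpa using mul_nonneg hθ hb
    · nlinarith
  have hθab : θ * a * b ≤ θ ^ 2 / D * b ^ 2 := by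
    rw [div_mul_eq_mul_div, le_div_iff₀ hD]
    nlinarith [mul_nonneg hθ hb]
  have hKb : K * b ≤ g := by
    rcases hb.eq_or_lt with rfl | hb'
    · simpa using hg
    · have : K * b ^ 2 ≤ g * b := by simp only [K]; nlinarith
      nlinarith
  have ha2 : a ^ 2 ≤ θ ^ 2 / D ^ 2 * b ^ 2 := by
    rw [div_mul_eq_mul_div, le_div_iff₀ (by positivity)]
    nlinarith [mul_nonneg hD.le ha]
  have hbg : b ≤ g * (1 / K) := by
    rw [mul_one_div, le_div_iff₀ hK]
    linarith
  calc √(a ^ 2 + b ^ 2) ≤ √((θ ^ 2 / D ^ 2 + 1) * b ^ 2) := Real.sqrt_le_sqrt (by linarith)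
    _ = √(θ ^ 2 / D ^ 2 + 1) * b := by rw [Real.sqrt_mul (by positivity), Real.sqrt_sq hb]
    _ ≤ √(θ ^ 2 / D ^ 2 + 1) * (g * (1 / K)) := by gcongr
    _ = g * √(θ ^ 2 / D ^ 2 + 1) * (1 / K) := by ring

theorem l2v_le_of_transpose_mulVec_bounds {A : Matrix (Fin n) (Fin m) ℝ} {T Δ : Finset (Fin m)}
    (hdisj : Disjoint T Δ) {δT δΔ θ : ℝ} (hδT : RIP A T.card δT) (hδΔ : RIP A Δ.card δΔ)
    (hθ : ROC A T.card Δ.card θ) (hδT1 : δT < 1) (hpos : 0 < 1 - δΔ - θ ^ 2 / (1 - δT))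
    {γ : ℝ} (hγ : 0 ≤ γ) {u : Fin m → ℝ} (hu : suppOn u (T ∪ Δ))
    (hT : ∀ j ∈ T, (Aᵀ *ᵥ (A *ᵥ u)) j = 0) (hΔ : ∀ j ∈ Δ, |(Aᵀ *ᵥ (A *ᵥ u)) j| ≤ γ) :
    l2v u ≤ γ * √(Δ.card) * √(θ ^ 2 / (1 - δT) ^ 2 + 1) * (1 / (1 - δΔ - θ ^ 2 / (1 - δT))) := by
  set uT := (T : Set (Fin m)).indicator u
  set uΔ := (Δ : Set (Fin m)).indicator u
  have hsT : suppOn uT T := suppOn_indicator u T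
  have hsΔ : suppOn uΔ Δ := suppOn_indicator u Δ
  have hsplit : u = uT + uΔ := eq_indicator_add_indicator_of_suppOn_union hdisj hu
  set P := A *ᵥ uT
  set Q := A *ᵥ uΔ
  have hPQ : |P ⬝ᵥ Q| ≤ θ * l2v uT * l2v uΔ := hθ.2 T Δ hdisj le_rfl le_rfl uT uΔ hsT hsΔ
  have hPu : P ⬝ᵥ (P + Q) = 0 := by
    rw [← mulVec_add, ← hsplit, mulVec_dotProduct_mulVec]
    exact dotProduct_eq_zero_of_suppOn hsT hT
  have hQu : Q ⬝ᵥ (P + Q) ≤ γ * √(Δ.card) * l2v uΔ := by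
    rw [← mulVec_add, ← hsplit, mulVec_dotProduct_mulVec, mul_assoc]
    exact (dotProduct_le_of_suppOn hsΔ hΔ).trans
      (mul_le_mul_of_nonneg_left (sum_abs_le_sqrt_card_mul_l2v hsΔ) hγ)
  have hRT := hδT.sq_l2v_le le_rfl hsT
  have hRΔ := hδΔ.sq_l2v_le le_rfl hsΔ
  rw [dotProduct_add] at hPu hQu
  rw [← Real.sqrt_sq (l2v_nonneg u), hsplit, sq_l2v_add_of_disjoint hdisj hsT hsΔ]
  refine sqrt_sq_add_sq_le_of_quadratic_bounds (l2v_nonneg _) (l2v_nonneg _) (by linarith) hθ.1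
    (mul_nonneg hγ (Real.sqrt_nonneg _)) hpos ?_ ?_
  · linarith [abs_le.mp hPQ]
  · linarith [abs_le.mp hPQ, dotProduct_comm P Q]

theorem stmt7_general (n m : ℕ) (A : Matrix (Fin n) (Fin m) ℝ) (T Δ : Finset (Fin m))
    (hdisj : Disjoint T Δ)
    (hrank : IsUnit ((cols A (T ∪ Δ))ᵀ * cols A (T ∪ Δ)))
    (δT δΔ θ : ℝ)
    (hδT : RIP A T.card δT) (hδΔ : RIP A Δ.card δΔ)
    (hθ : ROC A T.card Δ.card θ)
    (hδT1 : δT < 1)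
    (hpos : 0 < 1 - δΔ - θ ^ 2 / (1 - δT))
    (γ : ℝ) (hγ : 0 < γ) (y : Fin n → ℝ) (btil : Fin m → ℝ)
    (hmin : IsRestrMin A y γ T (T ∪ Δ) btil) :
    l2v (btil - lsqFull A (T ∪ Δ) y) ≤
      γ * Real.sqrt (Δ.card) * Real.sqrt (θ ^ 2 / (1 - δT) ^ 2 + 1) *
        (1 / (1 - δΔ - θ ^ 2 / (1 - δT))) := by
  have hsupp : suppOn (btil - lsqFull A (T ∪ Δ) y) (T ∪ Δ) := fun j hj => by
    rw [Pi.sub_apply, hmin.1 j hj, suppOn_lsqFull j hj, sub_zero]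
  refine l2v_le_of_transpose_mulVec_bounds hdisj hδT hδΔ hθ hδT1 hpos hγ.le hsupp
    (fun j hj => ?_) (fun j hj => ?_)
  · rw [transpose_mulVec_mulVec_sub_lsqFull hrank btil (mem_union_left _ hj)]
    exact hmin.transpose_mulVec_residual_eq_zero (mem_union_left _ hj) hj
  · rw [transpose_mulVec_mulVec_sub_lsqFull hrank btil (mem_union_right _ hj)]
    exact hmin.abs_transpose_mulVec_residual_le hγ.le (mem_union_right _ hj)

/-- RIP-based ℓ² error bound for the restricted modified-BPDN minimizer. -/
theorem stmt7 (n m : ℕ) (A : Matrix (Fin n) (Fin m) ℝ) (T Δ : Finset (Fin m))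
    (hdisj : Disjoint T Δ)
    (hrank : IsUnit ((cols A (T ∪ Δ))ᵀ * cols A (T ∪ Δ)))
    (δT δΔ θ : ℝ)
    (hδT : RIP A T.card δT) (hδΔ : RIP A Δ.card δΔ)
    (hθ : ROC A T.card Δ.card θ) (hθ' : ROC A Δ.card T.card θ)
    (hδT1 : δT < 1)
    (hpos : 0 < 1 - δΔ - θ ^ 2 / (1 - δT))
    (γ : ℝ) (hγ : 0 < γ) (y : Fin n → ℝ) (btil : Fin m → ℝ)
    (hmin : IsRestrMin A y γ T (T ∪ Δ) btil) :
    l2v (btil - lsqFull A (T ∪ Δ) y) ≤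
      γ * Real.sqrt (Δ.card) * Real.sqrt (θ ^ 2 / (1 - δT) ^ 2 + 1) *
        (1 / (1 - δΔ - θ ^ 2 / (1 - δT))) :=
  stmt7_general n m A T Δ hdisj hrank δT δΔ θ hδT hδΔ hθ hδT1 hpos γ hγ y btil hmin
end
end

section
/- Let y = Ax + w with x supported on N, T and Δ disjoint with N ⊆ N_e := T ∪ Δ, A_{N_e} of full column rank, M = I − A_T(A_T'A_T)^{-1}A_T', and c the least-squares estimate on N_e. If ‖A'(y − A_{N_e}c_{N_e})‖_∞ < γ·[1 − max_{ω∉N_e} ‖(A_Δ'MA_Δ)^{-1}A_Δ'MA_ω‖₁], then the global minimizer b̃ of L(b) = (1/2)‖y−Ab‖₂² + γ‖b_{T^c}‖₁ is unique, supported on N_e, and satisfies ‖b̃ − x‖_∞ ≤ γ·max(‖(A_T'A_T)^{-1}A_T'A_Δ(A_Δ'MA_Δ)^{-1}‖_∞, ‖(A_Δ'MA_Δ)^{-1}‖_∞) + ‖(A_{N_e}'A_{N_e})^{-1}A_{N_e}'‖_∞ · ‖w‖_∞. -/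
open Matrix Finset

noncomputable section

variable {n m : ℕ}

/-!
The minimizer is first found among vectors supported on `T ∪ Δ`, where `A` is injective and the
objective is therefore coercive. Its optimality conditions read `Aᵀ(y - A b) = γ g` with `g` a
subgradient of the penalty on `T ∪ Δ`. Solving the normal equations blockwise, with the Schur
complement `A_Δᵀ M A_Δ` of `A_Tᵀ A_T`, gives `b = c - γ (A_{N_e}ᵀ A_{N_e})⁻¹ g`, whose correction
term has `T`-block `-crossMat g_Δ` and `Δ`-block `schur⁻¹ g_Δ`. For `ω ∉ T ∪ Δ` the correlation
`(Aᵀ(y - A b))_ω` is `(Aᵀ(y - A c))_ω + γ A_ωᵀ M A_Δ schur⁻¹ g_Δ`, of size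
`< γ (1 - erc) + γ erc = γ`; so `g` extends to a subgradient that is strict off `T ∪ Δ`, which
certifies `b` as the unique global minimizer. The error bound is the triangle inequality for
`b - x = (A_{N_e}ᵀ A_{N_e})⁻¹ A_{N_e}ᵀ w - γ (A_{N_e}ᵀ A_{N_e})⁻¹ g`.
-/

open Filter Topology

section Norms

variable {ι κ : Type*} [Fintype ι] [Fintype κ]

lemma abs_le_linfv (v : ι → ℝ) (i : ι) : |v i| ≤ linfv v :=
  le_ciSup (f := fun i => |v i|) (Set.finite_range _).bddAbove i

lemma linfv_le {v : ι → ℝ} {a : ℝ} (ha : 0 ≤ a) (h : ∀ i, |v i| ≤ a) : linfv v ≤ a :=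
  Real.iSup_le h ha

lemma linfv_nonneg (v : ι → ℝ) : 0 ≤ linfv v :=
  Real.iSup_nonneg fun _ => abs_nonneg _

lemma l1v_nonneg (v : ι → ℝ) : 0 ≤ l1v v :=
  sum_nonneg fun _ _ => abs_nonneg _

lemma matInf_nonneg (B : Matrix κ ι ℝ) : 0 ≤ matInf B :=
  Real.iSup_nonneg fun _ => sum_nonneg fun _ _ => abs_nonneg _

lemma abs_dotProduct_le_l1v_mul_linfv (u v : ι → ℝ) : |u ⬝ᵥ v| ≤ l1v u * linfv v := by
  calc |u ⬝ᵥ v| ≤ ∑ i, |u i| * |v i| := by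
        simpa only [dotProduct, abs_mul] using abs_sum_le_sum_abs (fun i => u i * v i) univ
    _ ≤ ∑ i, |u i| * linfv v :=
        sum_le_sum fun i _ => mul_le_mul_of_nonneg_left (abs_le_linfv v i) (abs_nonneg _)
    _ = l1v u * linfv v := by rw [l1v, sum_mul]

lemma abs_mulVec_le_matInf_mul_linfv (B : Matrix κ ι ℝ) (v : ι → ℝ) (k : κ) :
    |(B *ᵥ v) k| ≤ matInf B * linfv v :=
  (abs_dotProduct_le_l1v_mul_linfv (B k) v).trans <| mul_le_mul_of_nonneg_right
    (le_ciSup (f := fun k => ∑ i, |B k i|) (Set.finite_range _).bddAbove k) (linfv_nonneg v)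

lemma two_mul_norm_sub_one_le_sum_sq (v : ι → ℝ) :
    2 * ‖v‖ - 1 ≤ ∑ i, v i ^ 2 := by
  have hnorm : ‖v‖ ≤ √(∑ i, v i ^ 2) := (pi_norm_le_iff_of_nonneg (Real.sqrt_nonneg _)).2 fun i =>
    Real.abs_le_sqrt (single_le_sum (fun j _ => sq_nonneg (v j)) (mem_univ i))
  have hsq : ‖v‖ ^ 2 ≤ ∑ i, v i ^ 2 :=
    (Real.le_sqrt (norm_nonneg v) (sum_nonneg fun i _ => sq_nonneg (v i))).1 hnorm
  nlinarith [sq_nonneg (‖v‖ - 1)]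

end Norms

section Scalar

lemma nonpos_of_forall_mul_le_mul_sq {d c δ : ℝ} (hδ : 0 < δ)
    (h : ∀ t, 0 < t → t < δ → d * t ≤ c * t ^ 2) : d ≤ 0 := by
  have hlim : Tendsto (fun t => c * t) (𝓝[>] 0) (𝓝 0) := by
    simpa using ((continuous_const_mul c).tendsto 0).mono_left nhdsWithin_le_nhds
  refine ge_of_tendsto hlim ?_
  filter_upwards [Ioo_mem_nhdsGT hδ] with t ht
  exact le_of_mul_le_mul_right (by linarith [h t ht.1 ht.2]) ht.1

lemma abs_add_sub_abs_eq_sign_mul {a t : ℝ} (ht : |t| ≤ |a|) :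
    |a + t| - |a| = Real.sign a * t := by
  rcases lt_trichotomy a 0 with ha | rfl | ha
  · rw [abs_of_neg ha] at ht
    rw [Real.sign_of_neg ha, abs_of_neg ha, abs_of_nonpos (by linarith [le_abs_self t])]
    ring
  · simp_all
  · rw [abs_of_pos ha] at ht
    rw [Real.sign_of_pos ha, abs_of_pos ha, abs_of_nonneg (by linarith [neg_abs_le t])]
    ring

lemma abs_add_mul_sub_le_abs {a a' g : ℝ} (hg : |g| ≤ 1)
    (hsign : a ≠ 0 → g = Real.sign a) :
    |a| + g * (a' - a) ≤ |a'| := by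
  have hga : g * a = |a| := by
    rcases lt_trichotomy a 0 with ha | rfl | ha
    · rw [hsign ha.ne, Real.sign_of_neg ha, abs_of_neg ha, neg_one_mul]
    · rw [mul_zero, abs_zero]
    · rw [hsign ha.ne', Real.sign_of_pos ha, abs_of_pos ha, one_mul]
  have hga' : g * a' ≤ |a'| := (le_abs_self _).trans <| by
    rw [abs_mul]; exact mul_le_of_le_one_left (abs_nonneg _) hg
  linarith [mul_sub g a' a]

variable {r c w a : ℝ}

lemma abs_le_of_forall_mul_le (hw : 0 ≤ w)
    (h : ∀ t, r * t ≤ c * t ^ 2 + w * (|a + t| - |a|)) : |r| ≤ w := by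
  have hpen : ∀ t, w * (|a + t| - |a|) ≤ w * |t| := fun t =>
    mul_le_mul_of_nonneg_left (by linarith [abs_add_le a t]) hw
  have h₁ := nonpos_of_forall_mul_le_mul_sq (d := r - w) (c := c) one_pos fun t ht _ => by
    have := hpen t
    rw [abs_of_pos ht] at this
    linarith [h t]
  have h₂ := nonpos_of_forall_mul_le_mul_sq (d := -r - w) (c := c) one_pos fun t ht _ => by
    have := hpen (-t)
    rw [abs_neg, abs_of_pos ht] at this
    linarith [h (-t)]
  exact abs_le.mpr ⟨by linarith, by linarith⟩

lemma eq_mul_sign_of_forall_mul_le (ha : a ≠ 0)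
    (h : ∀ t, r * t ≤ c * t ^ 2 + w * (|a + t| - |a|)) : r = w * Real.sign a := by
  have hδ : 0 < |a| := abs_pos.mpr ha
  have key : ∀ t, |t| ≤ |a| → (r - w * Real.sign a) * t ≤ c * t ^ 2 := fun t ht => by
    have := h t
    rw [abs_add_sub_abs_eq_sign_mul ht] at this
    linarith
  have h₁ := nonpos_of_forall_mul_le_mul_sq hδ fun t h0 hta =>
    key t (by rw [abs_of_pos h0]; exact hta.le)
  have h₂ := nonpos_of_forall_mul_le_mul_sq (d := -(r - w * Real.sign a)) hδ fun t h0 hta => by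
    have := key (-t) (by rw [abs_neg, abs_of_pos h0]; exact hta.le)
    linarith
  linarith

end Scalar

section Subvectors

variable {S : Finset (Fin m)}

def extendZero (S : Finset (Fin m)) (u : {j // j ∈ S} → ℝ) : Fin m → ℝ :=
  fun j => if h : j ∈ S then u ⟨j, h⟩ else 0

lemma suppOn_extendZero (u : {j // j ∈ S} → ℝ) : suppOn (extendZero S u) S :=
  fun _ hj => dif_neg hj

lemma subv_extendZero (u : {j // j ∈ S} → ℝ) : subv (extendZero S u) S = u :=
  funext fun j => dif_pos j.2

lemma extendZero_subv {b : Fin m → ℝ} (hb : suppOn b S) : extendZero S (subv b S) = b := by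
  funext j
  by_cases hj : j ∈ S
  · exact dif_pos hj
  · rw [suppOn_extendZero _ j hj, hb j hj]

lemma eq_zero_of_subv_eq_zero {b : Fin m → ℝ} (hb : suppOn b S) (h : subv b S = 0) : b = 0 := by
  funext j
  by_cases hj : j ∈ S
  · exact congrFun h ⟨j, hj⟩
  · exact hb j hj

lemma cols_mulVec_subv (A : Matrix (Fin n) (Fin m) ℝ) {b : Fin m → ℝ} (hb : suppOn b S) :
    cols A S *ᵥ subv b S = A *ᵥ b := by
  funext i
  simp only [mulVec, dotProduct, cols, subv, of_apply]
  rw [sum_coe_sort S fun j => A i j * b j]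
  exact sum_subset (subset_univ S) fun j _ hj => by rw [hb j hj, mul_zero]

lemma cols_transpose_mulVec (A : Matrix (Fin n) (Fin m) ℝ) (v : Fin n → ℝ) :
    (cols A S)ᵀ *ᵥ v = subv (Aᵀ *ᵥ v) S :=
  rfl

end Subvectors

section Objective

variable (A : Matrix (Fin n) (Fin m) ℝ) (y : Fin n → ℝ) (γ : ℝ) (T : Finset (Fin m))

lemma objL_eq (b b' : Fin m → ℝ) :
    objL A y γ T b' = objL A y γ T b - (Aᵀ *ᵥ (y - A *ᵥ b)) ⬝ᵥ (b' - b) +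
      1 / 2 * ∑ i, (A *ᵥ (b' - b)) i ^ 2 + γ * (l1c b' T - l1c b T) := by
  have hres : y - A *ᵥ b' = (y - A *ᵥ b) - A *ᵥ (b' - b) := by
    rw [mulVec_sub]; abel
  have hcross : (Aᵀ *ᵥ (y - A *ᵥ b)) ⬝ᵥ (b' - b) = (y - A *ᵥ b) ⬝ᵥ (A *ᵥ (b' - b)) := by
    rw [mulVec_transpose, dotProduct_mulVec]
  have hsq : ∑ i, (y i - (A *ᵥ b') i) ^ 2 = ∑ i, (y i - (A *ᵥ b) i) ^ 2 -
      2 * ((y - A *ᵥ b) ⬝ᵥ (A *ᵥ (b' - b))) + ∑ i, (A *ᵥ (b' - b)) i ^ 2 := by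
    simp only [dotProduct, mul_sum, ← sum_sub_distrib, ← sum_add_distrib]
    refine sum_congr rfl fun i _ => ?_
    rw [show y i - (A *ᵥ b') i = (y - A *ᵥ b') i from rfl, hres]
    simp only [Pi.sub_apply]
    ring
  rw [objL, objL, hsq, hcross]
  ring

lemma l1c_add_single (b : Fin m → ℝ) (j : Fin m) (t : ℝ) :
    l1c (b + Pi.single j t) T = l1c b T + if j ∈ T then 0 else |b j + t| - |b j| := by
  rw [l1c, l1c, ← sub_eq_iff_eq_add', ← sum_sub_distrib]
  split_ifs with hj
  · refine sum_eq_zero fun k hk => ?_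
    rw [Pi.add_apply, Pi.single_eq_of_ne (ne_of_mem_of_not_mem hj (mem_compl.1 hk)).symm, add_zero,
      sub_self]
  · rw [sum_eq_single_of_mem j (mem_compl.2 hj) fun k _ hk => by
      rw [Pi.add_apply, Pi.single_eq_of_ne hk, add_zero, sub_self]]
    rw [Pi.add_apply, Pi.single_eq_same]

variable {S : Finset (Fin m)} {b g : Fin m → ℝ}

lemma objL_eq_add_of_transpose_mulVec_eq (hr : Aᵀ *ᵥ (y - A *ᵥ b) = γ • g)
    (hgT : ∀ j ∈ T, g j = 0) (b' : Fin m → ℝ) :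
    objL A y γ T b' = objL A y γ T b + 1 / 2 * ∑ i, (A *ᵥ (b' - b)) i ^ 2 +
      γ * ∑ j ∈ Tᶜ, (|b' j| - (|b j| + g j * (b' j - b j))) := by
  have hdot : g ⬝ᵥ (b' - b) = ∑ j ∈ Tᶜ, g j * (b' j - b j) := by
    rw [dotProduct, ← sum_add_sum_compl T, sum_eq_zero fun j hj => by rw [hgT j hj, zero_mul],
      zero_add]
    rfl
  rw [objL_eq A y γ T b b', hr, smul_dotProduct, hdot, l1c, l1c, smul_eq_mul]
  simp only [sub_add_eq_sub_sub, sum_sub_distrib]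
  ring

lemma IsSubgrad.objL_le (hγ : 0 ≤ γ) (hg : IsSubgrad T b g)
    (hr : Aᵀ *ᵥ (y - A *ᵥ b) = γ • g) (b' : Fin m → ℝ) : objL A y γ T b ≤ objL A y γ T b' := by
  rw [objL_eq_add_of_transpose_mulVec_eq A y γ T hr hg.1 b']
  have hquad : 0 ≤ ∑ i, (A *ᵥ (b' - b)) i ^ 2 := sum_nonneg fun i _ => sq_nonneg _
  have hpen : 0 ≤ ∑ j ∈ Tᶜ, (|b' j| - (|b j| + g j * (b' j - b j))) :=
    sum_nonneg fun j hj => sub_nonneg.mpr <|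
      abs_add_mul_sub_le_abs (hg.2 j (mem_compl.1 hj)).1 (hg.2 j (mem_compl.1 hj)).2
  nlinarith

lemma IsSubgrad.eq_of_objL_le (hγ : 0 < γ) (hg : IsSubgrad T b g)
    (hr : Aᵀ *ᵥ (y - A *ᵥ b) = γ • g) (hTS : T ⊆ S) (hb : suppOn b S)
    (hstrict : ∀ j ∉ S, |g j| < 1) (hinj : Function.Injective (cols A S).mulVec)
    {b' : Fin m → ℝ} (hb' : objL A y γ T b' ≤ objL A y γ T b) : b' = b := by
  have hdecomp := objL_eq_add_of_transpose_mulVec_eq A y γ T hr hg.1 b'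
  set slack : Fin m → ℝ := fun j => |b' j| - (|b j| + g j * (b' j - b j))
  have hslack : ∀ j ∈ Tᶜ, 0 ≤ slack j := fun j hj => sub_nonneg.mpr <|
    abs_add_mul_sub_le_abs (hg.2 j (mem_compl.1 hj)).1 (hg.2 j (mem_compl.1 hj)).2
  have hquad : 0 ≤ ∑ i, (A *ᵥ (b' - b)) i ^ 2 := sum_nonneg fun i _ => sq_nonneg _
  have hsum : ∑ j ∈ Tᶜ, slack j = 0 := by
    have := sum_nonneg hslack
    nlinarith
  have hb'S : suppOn b' S := fun j hj => by
    have hjT : j ∈ Tᶜ := mem_compl.2 fun h => hj (hTS h)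
    have hzero := (sum_eq_zero_iff_of_nonneg hslack).1 hsum j hjT
    simp only [slack, hb j hj, abs_zero, sub_zero, zero_add] at hzero
    by_contra hne
    have : g j * b' j < |b' j| := by
      calc g j * b' j ≤ |g j| * |b' j| := by rw [← abs_mul]; exact le_abs_self _
        _ < 1 * |b' j| := mul_lt_mul_of_pos_right (hstrict j hj) (abs_pos.2 hne)
        _ = |b' j| := one_mul _
    linarith
  have hd : suppOn (b' - b) S := fun j hj => by rw [Pi.sub_apply, hb'S j hj, hb j hj, sub_zero]
  have hAd : A *ᵥ (b' - b) = 0 := by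
    have hq : ∑ i, (A *ᵥ (b' - b)) i ^ 2 = 0 := by nlinarith
    funext i
    exact pow_eq_zero_iff two_ne_zero |>.1 <| (sum_eq_zero_iff_of_nonneg fun i _ =>
      sq_nonneg ((A *ᵥ (b' - b)) i)).1 hq i (mem_univ i)
  refine sub_eq_zero.1 (eq_zero_of_subv_eq_zero hd (hinj ?_))
  rw [cols_mulVec_subv A hd, hAd, mulVec_zero]

end Objective

section RestrictedMinimizer

variable (A : Matrix (Fin n) (Fin m) ℝ) (y : Fin n → ℝ) (γ : ℝ) (T : Finset (Fin m))
  {S : Finset (Fin m)} {b : Fin m → ℝ}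

lemma IsRestrMin.kkt (hγ : 0 < γ) (hb : IsRestrMin A y γ T S b) {g : Fin m → ℝ}
    (hr : Aᵀ *ᵥ (y - A *ᵥ b) = γ • g) {j : Fin m} (hj : j ∈ S) :
    (j ∈ T → g j = 0) ∧ (j ∉ T → |g j| ≤ 1 ∧ (b j ≠ 0 → g j = Real.sign (b j))) := by
  have key : ∀ t, γ * g j * t ≤ (1 / 2 * ∑ i, A i j ^ 2) * t ^ 2 +
      (if j ∈ T then 0 else γ) * (|b j + t| - |b j|) := fun t => by
    have hsupp : suppOn (b + Pi.single j t) S := fun k hk => by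
      rw [Pi.add_apply, hb.1 k hk, Pi.single_eq_of_ne (ne_of_mem_of_not_mem hj hk).symm, add_zero]
    have := (hb.2 _ hsupp).trans_eq (objL_eq A y γ T b _)
    rw [add_sub_cancel_left, l1c_add_single, add_sub_cancel_left, dotProduct_single, hr,
      Pi.smul_apply, smul_eq_mul] at this
    have hquad : ∑ i, (A *ᵥ Pi.single j t) i ^ 2 = (∑ i, A i j ^ 2) * t ^ 2 := by
      simp [mulVec_single, mul_pow, sum_mul]
    rw [hquad] at this
    split_ifs at this ⊢ <;> linarith
  by_cases hjT : j ∈ T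
  · simp only [hjT, if_true, zero_mul, add_zero] at key
    have := abs_le_of_forall_mul_le (a := 0) le_rfl (by simpa using key)
    exact ⟨fun _ => by simpa [hγ.ne'] using abs_nonpos_iff.mp this, fun h => absurd hjT h⟩
  · simp only [hjT, if_false] at key
    refine ⟨fun h => absurd h hjT, fun _ => ⟨?_, fun hne => ?_⟩⟩
    · have := abs_le_of_forall_mul_le hγ.le key
      rwa [abs_mul, abs_of_pos hγ, mul_le_iff_le_one_right hγ] at this
    · exact mul_left_cancel₀ hγ.ne' (eq_mul_sign_of_forall_mul_le hne key)

lemma exists_isRestrMin (hγ : 0 ≤ γ) (hinj : Function.Injective (cols A S).mulVec) :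
    ∃ b, IsRestrMin A y γ T S b := by
  obtain ⟨K, hK0, hK⟩ := (cols A S).mulVecLin.exists_antilipschitzWith
    (LinearMap.ker_eq_bot.mpr hinj)
  set f : ({j // j ∈ S} → ℝ) → ℝ := fun u => objL A y γ T (extendZero S u)
  have hcont : Continuous f := by
    have hext : Continuous (extendZero S) := continuous_pi fun j => by
      by_cases hj : j ∈ S
      · simpa only [extendZero, dif_pos hj] using continuous_apply _
      · simpa only [extendZero, dif_neg hj] using continuous_const
    have hobj : Continuous (objL A y γ T) := by
      unfold objL l1c
      fun_prop
    exact hobj.comp hext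
  have hlow : ∀ u, ‖u‖ / K - (‖y‖ + 1 / 2) ≤ f u := fun u => by
    have hu : ‖u‖ / K ≤ ‖cols A S *ᵥ u‖ := by
      rw [div_le_iff₀' (by exact_mod_cast hK0)]
      simpa using hK.le_mul_dist u 0
    have hpen : 0 ≤ γ * l1c (extendZero S u) T :=
      mul_nonneg hγ (sum_nonneg fun _ _ => abs_nonneg _)
    have hsq := two_mul_norm_sub_one_le_sum_sq (y - cols A S *ᵥ u)
    have hres := norm_sub_norm_le (cols A S *ᵥ u) y
    rw [norm_sub_rev] at hres
    simp only [Pi.sub_apply] at hsq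
    simp only [f, objL, ← cols_mulVec_subv A (suppOn_extendZero u), subv_extendZero]
    linarith
  have htend : Tendsto f (cocompact _) atTop :=
    tendsto_atTop_mono hlow <| tendsto_atTop_add_const_right _ _ <|
      tendsto_norm_cocompact_atTop.atTop_div_const (by exact_mod_cast hK0)
  obtain ⟨u, hu⟩ := hcont.exists_forall_le htend
  refine ⟨extendZero S u, suppOn_extendZero u, fun b' hb' => ?_⟩
  simpa only [f, extendZero_subv hb'] using hu (subv b' S)

end RestrictedMinimizer

section Gram

variable {ι : Type*} [Fintype ι] {B : Matrix (Fin n) ι ℝ}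

lemma injective_mulVec_of_isUnit_gram [DecidableEq ι] (h : IsUnit (Bᵀ * B)) :
    Function.Injective B.mulVec :=
  fun u v huv => mulVec_injective_iff_isUnit.2 h <| by simp only [← mulVec_mulVec, huv]

lemma posDef_gram (h : Function.Injective B.mulVec) : (Bᵀ * B).PosDef := by
  simpa only [conjTranspose_eq_transpose_of_trivial] using PosDef.conjTranspose_mul_self B h

end Gram

section BlockStructure

variable (A : Matrix (Fin n) (Fin m) ℝ) {T Δ : Finset (Fin m)}

lemma isUnit_gram_of_subset {S : Finset (Fin m)} (hTS : T ⊆ S)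
    (h : IsUnit ((cols A S)ᵀ * cols A S)) : IsUnit ((cols A T)ᵀ * cols A T) := by
  have hincl : Function.Injective fun j : {j // j ∈ T} => (⟨j.1, hTS j.2⟩ : {j // j ∈ S}) :=
    fun i j hij => Subtype.ext (by simpa only [Subtype.mk.injEq] using hij)
  exact ((posDef_gram (injective_mulVec_of_isUnit_gram h)).submatrix hincl).isUnit

lemma schur_eq_sub : schur A T Δ = (cols A Δ)ᵀ * cols A Δ -
    (cols A Δ)ᵀ * cols A T * ((cols A T)ᵀ * cols A T)⁻¹ * ((cols A T)ᵀ * cols A Δ) := by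
  simp only [schur, projM, Matrix.mul_sub, Matrix.sub_mul, Matrix.mul_one, Matrix.mul_assoc]

lemma projM_transpose : (projM A T)ᵀ = projM A T := by
  simp only [projM, transpose_sub, transpose_one, transpose_mul, transpose_transpose,
    transpose_nonsing_inv, Matrix.mul_assoc]

lemma schur_transpose : (schur A T Δ)ᵀ = schur A T Δ := by
  simp only [schur, transpose_mul, transpose_transpose, projM_transpose, Matrix.mul_assoc]

lemma projM_mul_cols_mul_schur_inv : projM A T * cols A Δ * (schur A T Δ)⁻¹ =
    cols A Δ * (schur A T Δ)⁻¹ - cols A T * crossMat A T Δ := by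
  simp only [projM, crossMat, Matrix.sub_mul, Matrix.one_mul, Matrix.mul_assoc]

lemma abs_transpose_mulVec_le_erc (v : {j // j ∈ Δ} → ℝ) (ω : Fin m) :
    |(Aᵀ *ᵥ ((projM A T * cols A Δ * (schur A T Δ)⁻¹) *ᵥ v)) ω| ≤ erc A T Δ ω * linfv v := by
  set N := projM A T * cols A Δ * (schur A T Δ)⁻¹
  have hNt : Nᵀ = (schur A T Δ)⁻¹ * ((cols A Δ)ᵀ * projM A T) := by
    simp only [N, transpose_mul, transpose_nonsing_inv, schur_transpose, projM_transpose,
      Matrix.mul_assoc]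
  calc |(Aᵀ *ᵥ (N *ᵥ v)) ω| = |(fun i => A i ω) ⬝ᵥ (N *ᵥ v)| := rfl
    _ = |((schur A T Δ)⁻¹ *ᵥ (((cols A Δ)ᵀ * projM A T) *ᵥ fun i => A i ω)) ⬝ᵥ v| := by
      rw [dotProduct_mulVec, ← mulVec_transpose, hNt, ← mulVec_mulVec]
    _ ≤ erc A T Δ ω * linfv v := abs_dotProduct_le_l1v_mul_linfv _ _

variable (hdisj : Disjoint T Δ)
include hdisj

lemma cols_union_mulVec (v : {j // j ∈ T ∪ Δ} → ℝ) :
    cols A (T ∪ Δ) *ᵥ v = cols A T *ᵥ (v ∘ Equiv.Finset.union T Δ hdisj ∘ Sum.inl) +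
      cols A Δ *ᵥ (v ∘ Equiv.Finset.union T Δ hdisj ∘ Sum.inr) := by
  have hcols : (cols A (T ∪ Δ)).submatrix id (Equiv.Finset.union T Δ hdisj) =
      fromCols (cols A T) (cols A Δ) := by
    ext i (j | j) <;> rfl
  have := submatrix_mulVec_equiv (cols A (T ∪ Δ)) (v ∘ Equiv.Finset.union T Δ hdisj) id
    (Equiv.Finset.union T Δ hdisj)
  rw [hcols, fromCols_mulVec] at this
  simpa [Function.comp_assoc] using this.symm

lemma gram_union_submatrix :
    ((cols A (T ∪ Δ))ᵀ * cols A (T ∪ Δ)).submatrix (Equiv.Finset.union T Δ hdisj)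
        (Equiv.Finset.union T Δ hdisj) =
      fromBlocks ((cols A T)ᵀ * cols A T) ((cols A T)ᵀ * cols A Δ)
        ((cols A Δ)ᵀ * cols A T) ((cols A Δ)ᵀ * cols A Δ) := by
  ext (i | i) (j | j) <;> rfl

variable {A} (hP : IsUnit ((cols A (T ∪ Δ))ᵀ * cols A (T ∪ Δ)))
include hP

lemma isUnit_schur : IsUnit (schur A T Δ) := by
  let := (isUnit_gram_of_subset A subset_union_left hP).invertible
  rwa [← isUnit_submatrix_equiv (Equiv.Finset.union T Δ hdisj) (Equiv.Finset.union T Δ hdisj),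
    gram_union_submatrix A hdisj, isUnit_fromBlocks_iff_of_invertible₁₁, invOf_eq_nonsing_inv,
    ← schur_eq_sub] at hP

lemma exists_gram_inv_submatrix_eq_fromBlocks : ∃ X Y,
    ((cols A (T ∪ Δ))ᵀ * cols A (T ∪ Δ))⁻¹.submatrix (Equiv.Finset.union T Δ hdisj)
        (Equiv.Finset.union T Δ hdisj) =
      fromBlocks X (-crossMat A T Δ) Y (schur A T Δ)⁻¹ := by
  let := (isUnit_gram_of_subset A subset_union_left hP).invertible
  let : Invertible ((cols A Δ)ᵀ * cols A Δ -
      (cols A Δ)ᵀ * cols A T * ⅟((cols A T)ᵀ * cols A T) * ((cols A T)ᵀ * cols A Δ)) := by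
    rw [invOf_eq_nonsing_inv, ← schur_eq_sub]
    exact (isUnit_schur hdisj hP).invertible
  let := fromBlocks₁₁Invertible ((cols A T)ᵀ * cols A T) ((cols A T)ᵀ * cols A Δ)
    ((cols A Δ)ᵀ * cols A T) ((cols A Δ)ᵀ * cols A Δ)
  rw [← inv_submatrix_equiv, gram_union_submatrix A hdisj, ← invOf_eq_nonsing_inv,
    invOf_fromBlocks₁₁_eq]
  simp only [invOf_eq_nonsing_inv, ← schur_eq_sub, crossMat]
  exact ⟨_, _, rfl⟩

variable {g : Fin m → ℝ} (hgT : ∀ j ∈ T, g j = 0)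
include hgT

lemma gram_inv_mulVec_subv_comp :
    (((cols A (T ∪ Δ))ᵀ * cols A (T ∪ Δ))⁻¹ *ᵥ subv g (T ∪ Δ)) ∘ Equiv.Finset.union T Δ hdisj =
      Sum.elim (-(crossMat A T Δ *ᵥ subv g Δ)) ((schur A T Δ)⁻¹ *ᵥ subv g Δ) := by
  obtain ⟨X, Y, hXY⟩ := exists_gram_inv_submatrix_eq_fromBlocks hdisj hP
  have hg : subv g (T ∪ Δ) ∘ Equiv.Finset.union T Δ hdisj =
      Sum.elim (0 : {j // j ∈ T} → ℝ) (subv g Δ) := by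
    funext j
    rcases j with j | j
    exacts [hgT j j.2, rfl]
  have := submatrix_mulVec_equiv ((cols A (T ∪ Δ))ᵀ * cols A (T ∪ Δ))⁻¹
    (subv g (T ∪ Δ) ∘ Equiv.Finset.union T Δ hdisj) (Equiv.Finset.union T Δ hdisj)
    (Equiv.Finset.union T Δ hdisj)
  simp only [Function.comp_assoc, Equiv.self_comp_symm, Function.comp_id] at this
  rw [← this, hXY, hg, fromBlocks_mulVec]
  simp [neg_mulVec]

lemma abs_gram_inv_mulVec_subv_le (j : {j // j ∈ T ∪ Δ}) :
    |(((cols A (T ∪ Δ))ᵀ * cols A (T ∪ Δ))⁻¹ *ᵥ subv g (T ∪ Δ)) j| ≤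
      max (matInf (crossMat A T Δ)) (matInf (schur A T Δ)⁻¹) * linfv (subv g Δ) := by
  obtain ⟨k, rfl⟩ := (Equiv.Finset.union T Δ hdisj).surjective j
  rw [← Function.comp_apply (g := Equiv.Finset.union T Δ hdisj)
    (f := ((cols A (T ∪ Δ))ᵀ * cols A (T ∪ Δ))⁻¹ *ᵥ subv g (T ∪ Δ)),
    gram_inv_mulVec_subv_comp hdisj hP hgT]
  rcases k with t | d
  · rw [Sum.elim_inl, Pi.neg_apply, abs_neg]
    exact (abs_mulVec_le_matInf_mul_linfv _ _ t).trans <|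
      mul_le_mul_of_nonneg_right (le_max_left _ _) (linfv_nonneg _)
  · rw [Sum.elim_inr]
    exact (abs_mulVec_le_matInf_mul_linfv _ _ d).trans <|
      mul_le_mul_of_nonneg_right (le_max_right _ _) (linfv_nonneg _)

lemma cols_union_mulVec_gram_inv_mulVec :
    cols A (T ∪ Δ) *ᵥ (((cols A (T ∪ Δ))ᵀ * cols A (T ∪ Δ))⁻¹ *ᵥ subv g (T ∪ Δ)) =
      (projM A T * cols A Δ * (schur A T Δ)⁻¹) *ᵥ subv g Δ := by
  rw [cols_union_mulVec A hdisj, ← Function.comp_assoc, ← Function.comp_assoc,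
    gram_inv_mulVec_subv_comp hdisj hP hgT, projM_mul_cols_mul_schur_inv]
  simp only [Sum.elim_comp_inl, Sum.elim_comp_inr, sub_mulVec, mulVec_neg, mulVec_mulVec]
  abel

end BlockStructure

section LeastSquares

variable (A : Matrix (Fin n) (Fin m) ℝ) {S : Finset (Fin m)} (y : Fin n → ℝ)
  (hP : IsUnit ((cols A S)ᵀ * cols A S))
include hP

lemma subv_eq_lsq_sub {b : Fin m → ℝ} (hb : suppOn b S) :
    subv b S = lsq A S y - ((cols A S)ᵀ * cols A S)⁻¹ *ᵥ subv (Aᵀ *ᵥ (y - A *ᵥ b)) S := by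
  rw [← cols_transpose_mulVec, ← cols_mulVec_subv A hb, mulVec_sub, mulVec_sub, lsq,
    sub_sub_cancel, mulVec_mulVec, mulVec_mulVec, Matrix.mul_assoc,
    nonsing_inv_mul _ ((isUnit_iff_isUnit_det _).1 hP), one_mulVec]

lemma lsq_mulVec_add {x : Fin m → ℝ} (hx : suppOn x S) (w : Fin n → ℝ) :
    lsq A S (A *ᵥ x + w) = subv x S + (((cols A S)ᵀ * cols A S)⁻¹ * (cols A S)ᵀ) *ᵥ w := by
  rw [lsq, ← cols_mulVec_subv A hx, mulVec_add, mulVec_add, mulVec_mulVec, mulVec_mulVec,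
    Matrix.mul_assoc, nonsing_inv_mul _ ((isUnit_iff_isUnit_det _).1 hP), one_mulVec,
    mulVec_mulVec]

end LeastSquares

section Correction

variable {A : Matrix (Fin n) (Fin m) ℝ} {T Δ : Finset (Fin m)} {y : Fin n → ℝ}
  {γ : ℝ} {b g : Fin m → ℝ}

lemma subv_eq_lsq_sub_smul {S : Finset (Fin m)} (hP : IsUnit ((cols A S)ᵀ * cols A S))
    (hb : suppOn b S) (hr : Aᵀ *ᵥ (y - A *ᵥ b) = γ • g) :
    subv b S = lsq A S y - γ • (((cols A S)ᵀ * cols A S)⁻¹ *ᵥ subv g S) := by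
  rw [subv_eq_lsq_sub A y hP hb, hr, ← mulVec_smul]
  rfl

lemma abs_lt_one_of_linfv_lt (hdisj : Disjoint T Δ)
    (hP : IsUnit ((cols A (T ∪ Δ))ᵀ * cols A (T ∪ Δ))) (hγ : 0 < γ) (hb : suppOn b (T ∪ Δ))
    (hr : Aᵀ *ᵥ (y - A *ᵥ b) = γ • g) (hgT : ∀ j ∈ T, g j = 0) (hgΔ : linfv (subv g Δ) ≤ 1)
    {ω : Fin m} (hω : linfv (Aᵀ *ᵥ (y - cols A (T ∪ Δ) *ᵥ lsq A (T ∪ Δ) y)) <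
      γ * (1 - erc A T Δ ω)) : |g ω| < 1 := by
  set N := projM A T * cols A Δ * (schur A T Δ)⁻¹
  set c := lsq A (T ∪ Δ) y
  have hres : y - A *ᵥ b = (y - cols A (T ∪ Δ) *ᵥ c) + γ • (N *ᵥ subv g Δ) := by
    rw [← cols_mulVec_subv A hb, subv_eq_lsq_sub_smul hP hb hr, mulVec_sub, mulVec_smul,
      cols_union_mulVec_gram_inv_mulVec hdisj hP hgT]
    abel
  have herc : |(Aᵀ *ᵥ (N *ᵥ subv g Δ)) ω| ≤ erc A T Δ ω :=
    (abs_transpose_mulVec_le_erc A _ ω).trans <| mul_le_of_le_one_right (l1v_nonneg _) hgΔ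
  have hbound : γ * |g ω| < γ * 1 := calc
    γ * |g ω| = |(Aᵀ *ᵥ (y - A *ᵥ b)) ω| := by
      rw [hr, Pi.smul_apply, smul_eq_mul, abs_mul, abs_of_pos hγ]
    _ = |(Aᵀ *ᵥ (y - cols A (T ∪ Δ) *ᵥ c)) ω + γ * (Aᵀ *ᵥ (N *ᵥ subv g Δ)) ω| := by
      rw [hres, mulVec_add, mulVec_smul]
      rfl
    _ ≤ |(Aᵀ *ᵥ (y - cols A (T ∪ Δ) *ᵥ c)) ω| + γ * |(Aᵀ *ᵥ (N *ᵥ subv g Δ)) ω| := by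
      rw [← abs_of_pos hγ, ← abs_mul, abs_of_pos hγ]
      exact abs_add_le _ _
    _ < γ * (1 - erc A T Δ ω) + γ * erc A T Δ ω :=
      add_lt_add_of_lt_of_le ((abs_le_linfv _ ω).trans_lt hω)
        (mul_le_mul_of_nonneg_left herc hγ.le)
    _ = γ * 1 := by ring
  exact lt_of_mul_lt_mul_left hbound hγ.le

lemma linfv_sub_le_of_transpose_mulVec_eq (hdisj : Disjoint T Δ)
    (hP : IsUnit ((cols A (T ∪ Δ))ᵀ * cols A (T ∪ Δ))) (hγ : 0 ≤ γ) (hb : suppOn b (T ∪ Δ))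
    (hr : Aᵀ *ᵥ (y - A *ᵥ b) = γ • g) (hgT : ∀ j ∈ T, g j = 0) (hgΔ : linfv (subv g Δ) ≤ 1)
    {x : Fin m → ℝ} {w : Fin n → ℝ} (hx : suppOn x (T ∪ Δ)) (hy : y = A *ᵥ x + w) :
    linfv (b - x) ≤ γ * max (matInf (crossMat A T Δ)) (matInf (schur A T Δ)⁻¹) +
      matInf (((cols A (T ∪ Δ))ᵀ * cols A (T ∪ Δ))⁻¹ * (cols A (T ∪ Δ))ᵀ) * linfv w := by
  have hnonneg : 0 ≤ γ * max (matInf (crossMat A T Δ)) (matInf (schur A T Δ)⁻¹) +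
      matInf (((cols A (T ∪ Δ))ᵀ * cols A (T ∪ Δ))⁻¹ * (cols A (T ∪ Δ))ᵀ) * linfv w :=
    add_nonneg (mul_nonneg hγ (le_max_of_le_left (matInf_nonneg _)))
      (mul_nonneg (matInf_nonneg _) (linfv_nonneg _))
  refine linfv_le hnonneg fun j => ?_
  by_cases hj : j ∈ T ∪ Δ
  · have hbj := congrFun (subv_eq_lsq_sub_smul hP hb hr) ⟨j, hj⟩
    rw [hy, lsq_mulVec_add A hP hx] at hbj
    simp only [subv, Pi.sub_apply, Pi.add_apply, Pi.smul_apply, smul_eq_mul] at hbj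
    rw [Pi.sub_apply, hbj, add_sub_assoc, add_sub_cancel_left]
    have hnoise := abs_mulVec_le_matInf_mul_linfv
      (((cols A (T ∪ Δ))ᵀ * cols A (T ∪ Δ))⁻¹ * (cols A (T ∪ Δ))ᵀ) w ⟨j, hj⟩
    have hcorr := (abs_gram_inv_mulVec_subv_le hdisj hP hgT ⟨j, hj⟩).trans <|
      mul_le_of_le_one_right (le_max_of_le_left (matInf_nonneg _)) hgΔ
    calc _ ≤ _ := abs_sub _ _
      _ = _ := by rw [abs_mul, abs_of_nonneg hγ]
      _ ≤ _ := add_le_add hnoise (mul_le_mul_of_nonneg_left hcorr hγ)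
      _ = _ := add_comm _ _
  · rw [Pi.sub_apply, hb j hj, hx j hj, sub_zero, abs_zero]
    exact hnonneg

end Correction

/-- modified-BPDN theorem, ℓ∞ bound for the unique global minimizer. -/
theorem stmt10 (n m : ℕ) (A : Matrix (Fin n) (Fin m) ℝ) (T Δ N : Finset (Fin m))
    (hdisj : Disjoint T Δ) (hNNe : N ⊆ T ∪ Δ)
    (hrank : IsUnit ((cols A (T ∪ Δ))ᵀ * cols A (T ∪ Δ)))
    (γ : ℝ) (hγ : 0 < γ) (x : Fin m → ℝ) (hx : suppOn x N)
    (wn : Fin n → ℝ) (y : Fin n → ℝ) (hy : y = A.mulVec x + wn)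
    (hcond : ∀ ω, ω ∉ T ∪ Δ →
      linfv (Aᵀ.mulVec (y - (cols A (T ∪ Δ)).mulVec (lsq A (T ∪ Δ) y))) <
        γ * (1 - erc A T Δ ω)) :
    ∃ btil : Fin m → ℝ,
      (∀ b, objL A y γ T btil ≤ objL A y γ T b) ∧
      (∀ b, (∀ b', objL A y γ T b ≤ objL A y γ T b') → b = btil) ∧
      suppOn btil (T ∪ Δ) ∧
      linfv (btil - x) ≤
        γ * max (matInf (crossMat A T Δ)) (matInf ((schur A T Δ)⁻¹)) +
          matInf (((cols A (T ∪ Δ))ᵀ * cols A (T ∪ Δ))⁻¹ * (cols A (T ∪ Δ))ᵀ) *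
            linfv wn := by
  have hinj := injective_mulVec_of_isUnit_gram hrank
  obtain ⟨b, hb⟩ := exists_isRestrMin A y γ T hγ.le hinj
  set g : Fin m → ℝ := γ⁻¹ • (Aᵀ *ᵥ (y - A *ᵥ b))
  have hr : Aᵀ *ᵥ (y - A *ᵥ b) = γ • g := (smul_inv_smul₀ hγ.ne' _).symm
  have hkkt := fun j (hj : j ∈ T ∪ Δ) => hb.kkt A y γ T hγ hr hj
  have hgT : ∀ j ∈ T, g j = 0 := fun j hj => (hkkt j (mem_union_left _ hj)).1 hj
  have hgΔ : linfv (subv g Δ) ≤ 1 := linfv_le zero_le_one fun j =>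
    ((hkkt j (mem_union_right _ j.2)).2 (disjoint_right.1 hdisj j.2)).1
  have hoff : ∀ ω ∉ T ∪ Δ, |g ω| < 1 := fun ω hω =>
    abs_lt_one_of_linfv_lt hdisj hrank hγ hb.1 hr hgT hgΔ (hcond ω hω)
  have hsub : IsSubgrad T b g := ⟨hgT, fun j hjT =>
    if hj : j ∈ T ∪ Δ then (hkkt j hj).2 hjT
    else ⟨(hoff j hj).le, fun hne => absurd (hb.1 j hj) hne⟩⟩
  refine ⟨b, hsub.objL_le A y γ T hγ.le hr, fun b' hb' => ?_, hb.1, ?_⟩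
  · exact hsub.eq_of_objL_le A y γ T hγ hr subset_union_left hb.1 hoff hinj (hb' b)
  · exact linfv_sub_le_of_transpose_mulVec_eq hdisj hrank hγ.le hb.1 hr hgT hgΔ
      (fun j hj => hx j fun h => hj (hNNe h)) hy
end
end
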